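/- For any traversal T of curves σ and ψ with vertices in ℝ^d, and any curve ψ' whose j-th vertex is within distance ε' of the j-th vertex of ψ for all j, the l-th largest matched distance satisfies |s_l^T − s_l^{T{ψ'}}| ≤ ε' for all l ∈ [|T|], where T{ψ'} denotes the traversal T applied to σ and ψ' instead of ψ. Consequently |d_kDTW(σ,ψ) − d_kDTW(σ,ψ')| ≤ k·ε'. -/

import Mathlib

open List

/-- A (monotone) traversal of two curves with `m'` and `m''` vertices:
a sequence of (0-based) index pairs starting at `(0,0)`, ending at `(m'-1, m''-1)`,
where each pair is followed by one that increments at least one index by one. -/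
def IsTraversal (m' m'' : ℕ) (T : List (ℕ × ℕ)) : Prop :=
  T ≠ [] ∧ T.head? = some (0, 0) ∧ T.getLast? = some (m' - 1, m'' - 1) ∧
  (∀ p ∈ T, p.1 < m' ∧ p.2 < m'') ∧
  T.Chain' (fun a b => b = (a.1 + 1, a.2) ∨ b = (a.1, a.2 + 1) ∨ b = (a.1 + 1, a.2 + 1))

/-- Sum of the `k` largest entries of a list of reals (zero-padded if the list is shorter). -/
noncomputable def topkSum (k : ℕ) (l : List ℝ) : ℝ :=
  ((l.insertionSort (· ≥ ·)).take k).sum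

/-- The list of matched distances of a traversal. -/
def matchedDists {E : Type*} [PseudoMetricSpace E] (σ τ : ℕ → E) (T : List (ℕ × ℕ)) :
    List ℝ :=
  T.map fun p => dist (σ p.1) (τ p.2)

/-- The `k`-DTW distance of curves `σ` (complexity `m'`) and `τ` (complexity `m''`). -/
noncomputable def kDTW {E : Type*} [PseudoMetricSpace E] (k : ℕ) (σ τ : ℕ → E)
    (m' m'' : ℕ) : ℝ :=
  sInf {x | ∃ T, IsTraversal m' m'' T ∧ x = topkSum k (matchedDists σ τ T)}

/-- The DTW distance. -/
noncomputable def DTW {E : Type*} [PseudoMetricSpace E] (σ τ : ℕ → E) (m' m'' : ℕ) : ℝ :=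
  sInf {x | ∃ T, IsTraversal m' m'' T ∧ x = (matchedDists σ τ T).sum}

/-- The discrete Fréchet distance. -/
noncomputable def discreteFrechet {E : Type*} [PseudoMetricSpace E] (σ τ : ℕ → E)
    (m' m'' : ℕ) : ℝ :=
  sInf {x | ∃ T, IsTraversal m' m'' T ∧ x = (matchedDists σ τ T).foldr max 0}

/-!
Both sorted lists are produced by inserting the matched distances one at a time, and inserting
`ε`-close values `x, y` into entrywise `ε`-close sorted lists keeps them entrywise `ε`-close: where
`x` and `y` land in different positions, the crossed entries `u ≤ x` and `y ≤ v` of the two lists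
are again `ε`-close to `x` and `y`. Hence every order statistic moves by at most `ε`, every top-`k`
sum by at most `k ε`, and so does the infimum over traversals.
-/

lemma abs_sub_le_of_crossed {x y u v ε : ℝ} (hxy : |x - y| ≤ ε) (huv : |u - v| ≤ ε)
    (hux : u ≤ x) (hyv : y ≤ v) : |x - v| ≤ ε ∧ |u - y| ≤ ε := by
  simp only [abs_sub_le_iff] at hxy huv ⊢
  constructor <;> constructor <;> linarith

lemma List.orderedInsert_eq_cons_of_pairwise {α : Type*} {r : α → α → Prop} [DecidableRel r]
    {a : α} {l : List α} (h : (a :: l).Pairwise r) : l.orderedInsert r a = a :: l := by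
  simpa [h.of_cons.insertionSort_eq] using h.insertionSort_eq

lemma forall₂_orderedInsert_ge_of_abs_sub_le {ε : ℝ} :
    ∀ {u v : List ℝ}, u.Pairwise (· ≥ ·) → v.Pairwise (· ≥ ·) →
      Forall₂ (fun a b => |a - b| ≤ ε) u v → ∀ {x y : ℝ}, |x - y| ≤ ε →
      Forall₂ (fun a b => |a - b| ≤ ε) (u.orderedInsert (· ≥ ·) x) (v.orderedInsert (· ≥ ·) y)
  | [], [], _, _, _, _, _, hxy => by simpa using hxy
  | u₀ :: u, v₀ :: v, hu, hv, h, x, y, hxy => by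
    obtain ⟨h₀, h⟩ := forall₂_cons.1 h
    have ih := @forall₂_orderedInsert_ge_of_abs_sub_le ε u v hu.of_cons hv.of_cons h
    by_cases hx : x ≥ u₀ <;> by_cases hy : y ≥ v₀
    · rw [orderedInsert_cons_of_le (· ≥ ·) _ hx, orderedInsert_cons_of_le (· ≥ ·) _ hy]
      exact .cons hxy (.cons h₀ h)
    · obtain ⟨hxv, huy⟩ := abs_sub_le_of_crossed hxy h₀ hx (not_le.1 hy).le
      rw [orderedInsert_cons_of_le (· ≥ ·) _ hx, orderedInsert_of_not_le (· ≥ ·) _ hy,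
        ← List.orderedInsert_eq_cons_of_pairwise hu]
      exact .cons hxv (ih huy)
    · obtain ⟨huy, hxv⟩ := abs_sub_le_of_crossed h₀ hxy (not_le.1 hx).le hy
      rw [orderedInsert_of_not_le (· ≥ ·) _ hx, orderedInsert_cons_of_le (· ≥ ·) _ hy,
        ← List.orderedInsert_eq_cons_of_pairwise hv]
      exact .cons huy (ih hxv)
    · rw [orderedInsert_of_not_le (· ≥ ·) _ hx, orderedInsert_of_not_le (· ≥ ·) _ hy]
      exact .cons h₀ (ih hxy)

lemma forall₂_insertionSort_ge_of_abs_sub_le {ε : ℝ} {a b : List ℝ}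
    (h : Forall₂ (fun x y => |x - y| ≤ ε) a b) :
    Forall₂ (fun x y => |x - y| ≤ ε) (a.insertionSort (· ≥ ·)) (b.insertionSort (· ≥ ·)) := by
  induction h with
  | nil => exact Forall₂.nil
  | cons hxy _ ih =>
    exact forall₂_orderedInsert_ge_of_abs_sub_le (pairwise_insertionSort _ _)
      (pairwise_insertionSort _ _) ih hxy

lemma abs_getD_sub_getD_le_of_forall₂ {ε : ℝ} {a b : List ℝ}
    (h : Forall₂ (fun x y => |x - y| ≤ ε) a b) {i : ℕ} (hi : i < a.length) :
    |a.getD i 0 - b.getD i 0| ≤ ε := by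
  rw [getD_eq_getElem _ _ hi, getD_eq_getElem _ _ (h.length_eq ▸ hi)]
  exact (forall₂_iff_get.1 h).2 i hi (h.length_eq ▸ hi)

lemma abs_sum_sub_sum_le_of_forall₂ {ε : ℝ} {a b : List ℝ}
    (h : Forall₂ (fun x y => |x - y| ≤ ε) a b) : |a.sum - b.sum| ≤ a.length * ε := by
  induction h with
  | nil => simp
  | @cons x y a b hxy _ ih =>
    calc |(x :: a).sum - (y :: b).sum| = |(x - y) + (a.sum - b.sum)| := by
          simp only [sum_cons]; ring_nf
      _ ≤ |x - y| + |a.sum - b.sum| := abs_add_le _ _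
      _ ≤ ε + a.length * ε := add_le_add hxy ih
      _ = (x :: a).length * ε := by push_cast [length_cons]; ring

lemma abs_topkSum_sub_topkSum_le {ε : ℝ} (hε : 0 ≤ ε) (k : ℕ) {a b : List ℝ}
    (h : Forall₂ (fun x y => |x - y| ≤ ε) a b) :
    |topkSum k a - topkSum k b| ≤ k * ε := by
  refine (abs_sum_sub_sum_le_of_forall₂
    (forall₂_take k (forall₂_insertionSort_ge_of_abs_sub_le h))).trans ?_
  gcongr
  exact_mod_cast length_take_le _ _

lemma topkSum_nonneg (k : ℕ) {l : List ℝ} (h : ∀ x ∈ l, 0 ≤ x) : 0 ≤ topkSum k l :=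
  sum_nonneg fun x hx => h x ((mem_insertionSort _).1 (mem_of_mem_take hx))

lemma forall₂_matchedDists_of_dist_le {E : Type*} [PseudoMetricSpace E] {σ τ τ' : ℕ → E}
    {T : List (ℕ × ℕ)} {ε : ℝ} (h : ∀ p ∈ T, dist (τ p.2) (τ' p.2) ≤ ε) :
    Forall₂ (fun x y => |x - y| ≤ ε) (matchedDists σ τ T) (matchedDists σ τ' T) := by
  rw [matchedDists, matchedDists, forall₂_map_left_iff, forall₂_map_right_iff, forall₂_same]
  intro p hp
  simpa only [dist_comm (σ p.1)] using (abs_dist_sub_le _ _ (σ p.1)).trans (h p hp)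

lemma matchedDists_nonneg {E : Type*} [PseudoMetricSpace E] (σ τ : ℕ → E) (T : List (ℕ × ℕ)) :
    ∀ x ∈ matchedDists σ τ T, 0 ≤ x := by
  simp only [matchedDists, mem_map]
  rintro _ ⟨p, _, rfl⟩
  exact dist_nonneg

lemma sInf_image_le_sInf_image_add {ι : Type*} {S : Set ι} {f g : ι → ℝ} {c : ℝ} (hc : 0 ≤ c)
    (hf : BddBelow (f '' S)) (h : ∀ i ∈ S, f i ≤ g i + c) :
    sInf (f '' S) ≤ sInf (g '' S) + c := by
  rcases S.eq_empty_or_nonempty with rfl | hS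
  · simpa using hc
  rw [← sub_le_iff_le_add]
  refine le_csInf (hS.image g) ?_
  rintro _ ⟨i, hi, rfl⟩
  linarith [csInf_le hf (Set.mem_image_of_mem f hi), h i hi]

lemma abs_sInf_image_sub_sInf_image_le {ι : Type*} {S : Set ι} {f g : ι → ℝ} {c : ℝ}
    (hc : 0 ≤ c) (hf : BddBelow (f '' S)) (hg : BddBelow (g '' S))
    (h : ∀ i ∈ S, |f i - g i| ≤ c) : |sInf (f '' S) - sInf (g '' S)| ≤ c := by
  rw [abs_sub_le_iff, sub_le_iff_le_add', sub_le_iff_le_add']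
  constructor
  · exact sInf_image_le_sInf_image_add hc hf fun i hi => by
      linarith [(abs_sub_le_iff.1 (h i hi)).1]
  · exact sInf_image_le_sInf_image_add hc hg fun i hi => by
      linarith [(abs_sub_le_iff.1 (h i hi)).2]

lemma kDTW_eq_sInf_image {E : Type*} [PseudoMetricSpace E] (k : ℕ) (σ τ : ℕ → E) (m' m'' : ℕ) :
    kDTW k σ τ m' m'' =
      sInf ((fun T => topkSum k (matchedDists σ τ T)) '' {T | IsTraversal m' m'' T}) := by
  simp only [kDTW, Set.image, Set.mem_ofPred_eq, eq_comm]

lemma bddBelow_topkSum_matchedDists {E : Type*} [PseudoMetricSpace E] (k : ℕ) (σ τ : ℕ → E)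
    (S : Set (List (ℕ × ℕ))) : BddBelow ((fun T => topkSum k (matchedDists σ τ T)) '' S) :=
  ⟨0, by rintro _ ⟨T, -, rfl⟩; exact topkSum_nonneg k (matchedDists_nonneg σ τ T)⟩

theorem kDTW_vertex_perturbation_general {d : ℕ} (k m' m'' : ℕ) (hm'' : 1 ≤ m'')
    (σ ψ ψ' : ℕ → EuclideanSpace ℝ (Fin d)) (ε' : ℝ)
    (hψ : ∀ j < m'', dist (ψ j) (ψ' j) ≤ ε') :
    (∀ T : List (ℕ × ℕ), IsTraversal m' m'' T →
      ∀ l, 1 ≤ l → l ≤ T.length →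
        |((matchedDists σ ψ T).insertionSort (· ≥ ·)).getD (l - 1) 0 -
          ((matchedDists σ ψ' T).insertionSort (· ≥ ·)).getD (l - 1) 0| ≤ ε') ∧
    |kDTW k σ ψ m' m'' - kDTW k σ ψ' m' m''| ≤ (k : ℝ) * ε' := by
  have hε : 0 ≤ ε' := dist_nonneg.trans (hψ 0 hm'')
  have hclose : ∀ T, IsTraversal m' m'' T →
      Forall₂ (fun x y => |x - y| ≤ ε') (matchedDists σ ψ T) (matchedDists σ ψ' T) :=
    fun T hT => forall₂_matchedDists_of_dist_le fun p hp => hψ _ (hT.2.2.2.1 p hp).2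
  refine ⟨fun T hT l hl hlT => ?_, ?_⟩
  · refine abs_getD_sub_getD_le_of_forall₂ (forall₂_insertionSort_ge_of_abs_sub_le (hclose T hT)) ?_
    simp only [length_insertionSort, matchedDists, length_map]
    omega
  · rw [kDTW_eq_sInf_image, kDTW_eq_sInf_image]
    exact abs_sInf_image_sub_sInf_image_le (by positivity) (bddBelow_topkSum_matchedDists ..)
      (bddBelow_topkSum_matchedDists ..) fun T hT => abs_topkSum_sub_topkSum_le hε k (hclose T hT)

/-- perturbing each vertex of `ψ` by at most `ε'` changes every order
statistic of the matched distances of a traversal by at most `ε'`, and hence the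
`k`-DTW distance by at most `k·ε'`. -/
theorem kDTW_vertex_perturbation {d : ℕ} (k m' m'' : ℕ) (hm' : 1 ≤ m') (hm'' : 1 ≤ m'')
    (σ ψ ψ' : ℕ → EuclideanSpace ℝ (Fin d)) (ε' : ℝ)
    (hψ : ∀ j < m'', dist (ψ j) (ψ' j) ≤ ε') :
    (∀ T : List (ℕ × ℕ), IsTraversal m' m'' T →
      ∀ l, 1 ≤ l → l ≤ T.length →
        |((matchedDists σ ψ T).insertionSort (· ≥ ·)).getD (l - 1) 0 -
          ((matchedDists σ ψ' T).insertionSort (· ≥ ·)).getD (l - 1) 0| ≤ ε') ∧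
    |kDTW k σ ψ m' m'' - kDTW k σ ψ' m' m''| ≤ (k : ℝ) * ε' :=
  kDTW_vertex_perturbation_general k m' m'' hm'' σ ψ ψ' ε' hψ
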